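/- For any 𝔷 = 𝔞+i𝔟 in the upper half-plane and ξ ∈ ℝ², Σ_{(x,y)∈ℤ², |x|≠|y|} e^{Ω_{𝔷,ξ}(x,y)} = Ψ_{𝔷,ξ}(0,0) + (2Σ_{(x,y)∈ℤ²} Ψ_{𝔷,ξ}(x,y) − Σ_{y∈ℤ} Ψ_{𝔷,ξ}(0,y) − Σ_{x∈ℤ} Ψ_{𝔷,ξ}(x,0)) + Σ_{(x,y)∈ℤ²} (Ψ_{𝔷,ξ}(x/2, y/2) − Ψ_{𝔷,ξ}(x, y/2) − Ψ_{𝔷,ξ}(x/2, y)), where moreover Ψ_{𝔷,ξ}(0,0) = 1. -/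

import Mathlib

open Complex

/-- `Ω_{𝔷,ξ}(x,y) = πi(𝔞(x²−y²) + i𝔟(x²+y²)) + 2πi⟨ξ,(x,y)⟩`. -/
noncomputable def Omega (a b : ℝ) (ξ : ℝ × ℝ) (x y : ℝ) : ℂ :=
  Real.pi * Complex.I * ((a : ℂ) * ((x : ℂ) ^ 2 - (y : ℂ) ^ 2)
      + Complex.I * (b : ℂ) * ((x : ℂ) ^ 2 + (y : ℂ) ^ 2))
    + 2 * Real.pi * Complex.I * ((ξ.1 : ℂ) * (x : ℂ) + (ξ.2 : ℂ) * (y : ℂ))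

/-- `Ψ_{𝔷,ξ}(x,y) = exp(Ω_{𝔷,ξ}(x+y, x−y))`. -/
noncomputable def Psi (a b : ℝ) (ξ : ℝ × ℝ) (x y : ℝ) : ℂ :=
  Complex.exp (Omega a b ξ (x + y) (x - y))

/-!
Every sum in the identity is a sum of the single Gaussian `H(m, n) = Ψ(m/2, n/2)` over a subset
of `ℤ²`: since `Ψ(x, y) = exp Ω(x + y, x - y)`, the substitution `(m, n) = (x + y, x - y)` turns
`exp Ω` on `{|x| ≠ |y|}` into `H` on the pairs of equal parity off the two axes, while the
right-hand side reads `H` on the sublattices `2ℤ × 2ℤ`, `{0} × 2ℤ`, `2ℤ × {0}`, `ℤ²`, `2ℤ × ℤ`,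
`ℤ × 2ℤ`. The theorem is then an inclusion–exclusion identity between indicators of these sets,
summed termwise thanks to the absolute convergence of `H`.
-/

open Set Function

noncomputable def halfPsi (a b : ℝ) (ξ : ℝ × ℝ) (p : ℤ × ℤ) : ℂ :=
  Psi a b ξ ((p.1 : ℝ) / 2) ((p.2 : ℝ) / 2)

lemma re_Omega (a b : ℝ) (ξ : ℝ × ℝ) (x y : ℝ) :
    (Omega a b ξ x y).re = -(Real.pi * b) * (x ^ 2 + y ^ 2) := by
  simp only [Omega, ← ofReal_pow, add_re, mul_re, ofReal_re, I_re, mul_zero, ofReal_im, I_im,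
    mul_one, sub_self, sub_re, sub_im, sub_zero, zero_mul, mul_im, one_mul, zero_add, add_im,
    add_zero, zero_sub, re_ofNat, im_ofNat, neg_mul, neg_inj]
  ring

lemma norm_halfPsi (a b : ℝ) (ξ : ℝ × ℝ) (p : ℤ × ℤ) :
    ‖halfPsi a b ξ p‖ =
      Real.exp (-(Real.pi * b / 2) * p.1 ^ 2) * Real.exp (-(Real.pi * b / 2) * p.2 ^ 2) := by
  rw [halfPsi, Psi, Complex.norm_exp, re_Omega, ← Real.exp_add]
  ring_nf

lemma summable_exp_neg_mul_int_sq {c : ℝ} (hc : 0 < c) :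
    Summable fun n : ℤ => Real.exp (-c * n ^ 2) := by
  refine (summable_pow_mul_jacobiTheta₂_term_bound 0 (div_pos hc Real.pi_pos) 0).congr fun n => ?_
  rw [pow_zero, one_mul]
  congr 1
  field_simp
  ring

lemma summable_halfPsi (a : ℝ) {b : ℝ} (hb : 0 < b) (ξ : ℝ × ℝ) : Summable (halfPsi a b ξ) := by
  have h := summable_exp_neg_mul_int_sq (by positivity : 0 < Real.pi * b / 2)
  refine Summable.of_norm ?_
  simpa only [norm_halfPsi] using
    h.mul_of_nonneg h (fun _ => (Real.exp_pos _).le) (fun _ => (Real.exp_pos _).le)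

lemma Summable.hasSum_indicator_range {α β γ : Type*} [UniformSpace α] [AddCommGroup α]
    [IsUniformAddGroup α] [CompleteSpace α]
    {f : β → α} (hf : Summable f) {g : γ → β} (hg : Injective g) :
    HasSum ((range g).indicator f) (∑' x, f (g x)) :=
  hasSum_subtype_iff_indicator.1 <| hg.hasSum_range_iff.2 (hf.comp_injective hg).hasSum

lemma Int.injective_two_mul : Injective (fun n : ℤ => 2 * n) :=
  mul_right_injective₀ two_ne_zero

lemma Int.range_two_mul : Set.range (fun n : ℤ => 2 * n) = {n | Even n} := by
  ext n
  simp [even_iff_exists_two_mul]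

/-- The last bracket is the indicator of the pairs of odd numbers; together with the point `0`,
the middle one is the indicator of the pairs of even numbers off the axes. -/
lemma indicator_sameParity_offAxes {R : Type*} [CommRing R] (f : ℤ × ℤ → R) (p : ℤ × ℤ) :
    {q : ℤ × ℤ | Even (q.1 + q.2) ∧ q.1 ≠ 0 ∧ q.2 ≠ 0}.indicator f p
      = (({0} : Set (ℤ × ℤ)).indicator f p
          + (2 * ({n : ℤ | Even n} ×ˢ {n : ℤ | Even n}).indicator f p
            - (({0} : Set ℤ) ×ˢ {n : ℤ | Even n}).indicator f p
            - ({n : ℤ | Even n} ×ˢ ({0} : Set ℤ)).indicator f p))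
        + (f p - ({n : ℤ | Even n} ×ˢ univ).indicator f p
            - (univ ×ˢ {n : ℤ | Even n}).indicator f p) := by
  obtain ⟨m, n⟩ := p
  simp only [indicator_apply, mem_ofPred_eq, mem_prod, mem_singleton_iff, mem_univ,
    Prod.mk_eq_zero, Int.even_iff, and_true, true_and]
  split_ifs <;> first | (exfalso; omega) | ring1

lemma hasSum_indicator_zero_halfPsi (a b : ℝ) (ξ : ℝ × ℝ) :
    HasSum (({0} : Set (ℤ × ℤ)).indicator (halfPsi a b ξ)) (Psi a b ξ 0 0) := by
  simpa [halfPsi] using hasSum_single (f := ({0} : Set (ℤ × ℤ)).indicator (halfPsi a b ξ)) 0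
    fun p hp => indicator_of_notMem (mem_singleton_iff.not.2 hp) _

section
variable (a : ℝ) {b : ℝ} (ξ : ℝ × ℝ)

lemma hasSum_indicator_halfPsi (hb : 0 < b) {γ : Type*} {g : γ → ℤ × ℤ} (hg : Injective g)
    {s : Set (ℤ × ℤ)} (hs : range g = s) {u : γ → ℂ} (hu : ∀ x, u x = halfPsi a b ξ (g x)) :
    HasSum (s.indicator (halfPsi a b ξ)) (∑' x, u x) := by
  rw [← hs, tsum_congr hu]
  exact (summable_halfPsi a hb ξ).hasSum_indicator_range hg

lemma hasSum_indicator_sameParity_offAxes (hb : 0 < b) :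
    HasSum ({q : ℤ × ℤ | Even (q.1 + q.2) ∧ q.1 ≠ 0 ∧ q.2 ≠ 0}.indicator (halfPsi a b ξ))
      (∑' p : {p : ℤ × ℤ // |p.1| ≠ |p.2|}, Complex.exp (Omega a b ξ (p.1.1 : ℝ) (p.1.2 : ℝ))) := by
  refine hasSum_indicator_halfPsi a ξ hb (g := fun p => (p.1.1 + p.1.2, p.1.1 - p.1.2))
    (fun p q h => ?_) ?_ fun p => ?_
  · simp only [Prod.mk.injEq] at h
    exact Subtype.ext (Prod.ext (by omega) (by omega))
  · ext ⟨m, n⟩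
    simp only [mem_range, Subtype.exists, Prod.mk.injEq, Prod.exists, mem_ofPred_eq, Int.even_iff,
      ne_eq, abs_eq_abs]
    constructor
    · rintro ⟨x, y, hxy, rfl, rfl⟩
      omega
    · rintro ⟨h, hm, hn⟩
      exact ⟨(m + n) / 2, (m - n) / 2, by omega, by omega, by omega⟩
  · simp only [halfPsi, Psi]
    push_cast
    ring_nf

lemma hasSum_indicator_even_even (hb : 0 < b) :
    HasSum (({n : ℤ | Even n} ×ˢ {n : ℤ | Even n}).indicator (halfPsi a b ξ))
      (∑' p : ℤ × ℤ, Psi a b ξ (p.1 : ℝ) (p.2 : ℝ)) := by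
  refine hasSum_indicator_halfPsi a ξ hb (Int.injective_two_mul.prodMap Int.injective_two_mul)
    (by rw [range_prodMap, Int.range_two_mul]) fun p => by simp [halfPsi]

lemma hasSum_indicator_zero_even (hb : 0 < b) :
    HasSum ((({0} : Set ℤ) ×ˢ {n : ℤ | Even n}).indicator (halfPsi a b ξ))
      (∑' y : ℤ, Psi a b ξ 0 (y : ℝ)) := by
  refine hasSum_indicator_halfPsi a ξ hb ((Prod.mk_right_injective 0).comp Int.injective_two_mul)
    (by rw [range_comp, Int.range_two_mul, singleton_prod]) fun y => by simp [halfPsi]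

lemma hasSum_indicator_even_zero (hb : 0 < b) :
    HasSum (({n : ℤ | Even n} ×ˢ ({0} : Set ℤ)).indicator (halfPsi a b ξ))
      (∑' x : ℤ, Psi a b ξ (x : ℝ) 0) := by
  refine hasSum_indicator_halfPsi a ξ hb ((Prod.mk_left_injective 0).comp Int.injective_two_mul)
    (by rw [range_comp, Int.range_two_mul, prod_singleton]) fun y => by simp [halfPsi]

lemma hasSum_halfPsi_sub_indicator_even (hb : 0 < b) :
    HasSum (fun q => halfPsi a b ξ q - ({n : ℤ | Even n} ×ˢ univ).indicator (halfPsi a b ξ) q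
        - (univ ×ˢ {n : ℤ | Even n}).indicator (halfPsi a b ξ) q)
      (∑' p : ℤ × ℤ,
        (Psi a b ξ ((p.1 : ℝ) / 2) ((p.2 : ℝ) / 2) - Psi a b ξ (p.1 : ℝ) ((p.2 : ℝ) / 2)
          - Psi a b ξ ((p.1 : ℝ) / 2) (p.2 : ℝ))) := by
  have hH := summable_halfPsi a hb ξ
  have hleft : Injective (Prod.map (2 * ·) id : ℤ × ℤ → ℤ × ℤ) :=
    Int.injective_two_mul.prodMap injective_id
  have hright : Injective (Prod.map id (2 * ·) : ℤ × ℤ → ℤ × ℤ) :=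
    injective_id.prodMap Int.injective_two_mul
  have hvalue : ∀ p : ℤ × ℤ,
      Psi a b ξ ((p.1 : ℝ) / 2) ((p.2 : ℝ) / 2) - Psi a b ξ (p.1 : ℝ) ((p.2 : ℝ) / 2)
        - Psi a b ξ ((p.1 : ℝ) / 2) (p.2 : ℝ)
      = halfPsi a b ξ p - halfPsi a b ξ (Prod.map (2 * ·) id p)
        - halfPsi a b ξ (Prod.map id (2 * ·) p) := fun p => by simp [halfPsi]
  rw [(((hH.hasSum.sub (hH.comp_injective hleft).hasSum).sub
    (hH.comp_injective hright).hasSum).congr_fun hvalue).tsum_eq]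
  refine (hH.hasSum.sub ?_).sub ?_
  · simpa [range_prodMap, Int.range_two_mul] using hH.hasSum_indicator_range hleft
  · simpa [range_prodMap, Int.range_two_mul] using hH.hasSum_indicator_range hright

end

theorem stmt_9 (a b : ℝ) (hb : 0 < b) (ξ : ℝ × ℝ) :
    (∑' p : {p : ℤ × ℤ // |p.1| ≠ |p.2|}, Complex.exp (Omega a b ξ (p.1.1 : ℝ) (p.1.2 : ℝ)))
      = Psi a b ξ 0 0
        + ((2 * ∑' p : ℤ × ℤ, Psi a b ξ (p.1 : ℝ) (p.2 : ℝ))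
            - (∑' y : ℤ, Psi a b ξ 0 (y : ℝ)) - ∑' x : ℤ, Psi a b ξ (x : ℝ) 0)
        + ∑' p : ℤ × ℤ,
            (Psi a b ξ ((p.1 : ℝ) / 2) ((p.2 : ℝ) / 2)
              - Psi a b ξ (p.1 : ℝ) ((p.2 : ℝ) / 2)
              - Psi a b ξ ((p.1 : ℝ) / 2) (p.2 : ℝ)) ∧
    Psi a b ξ 0 0 = 1 := by
  refine ⟨?_, by simp [Psi, Omega]⟩
  have hsum := ((hasSum_indicator_zero_halfPsi a b ξ).add
    ((((hasSum_indicator_even_even a ξ hb).mul_left 2).sub (hasSum_indicator_zero_even a ξ hb)).sub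
      (hasSum_indicator_even_zero a ξ hb))).add (hasSum_halfPsi_sub_indicator_even a ξ hb)
  exact (hasSum_indicator_sameParity_offAxes a ξ hb).unique
    (hsum.congr_fun (indicator_sameParity_offAxes _))
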